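/- Let the query A,p(s,t),C be nicely-moded. If A,p(s,t),C ⟹θ (A,B,C)θ is an input-consuming derivation step with selected atom p(s,t), input clause with body B, and relevant mgu θ, then Aθ = A. -/

import Mathlib

/- ## First-order terms -/

inductive Trm (F : Type) : Type
  | var : ℕ → Trm F
  | fn : F → List (Trm F) → Trm F

/-- A substitution: a mapping from variables to terms. -/
abbrev Subst (F : Type) := ℕ → Trm F

namespace Trm
variable {F : Type}

/-- Application of a substitution to a term. -/
def subst (σ : Subst F) : Trm F → Trm F
  | .var x => σ x
  | .fn f ts => .fn f (ts.attach.map (fun t => t.1.subst σ))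
decreasing_by simp_wf; have := List.sizeOf_lt_of_mem t.2; omega

/-- The set of variables occurring in a term. -/
def vars : Trm F → Set ℕ
  | .var x => {x}
  | .fn _ ts => (ts.attach.map (fun t => t.1.vars)).foldr (· ∪ ·) ∅
decreasing_by simp_wf; have := List.sizeOf_lt_of_mem t.2; omega

/-- The number of occurrences of a variable in a term. -/
def varCount (x : ℕ) : Trm F → ℕ
  | .var y => if y = x then 1 else 0
  | .fn _ ts => (ts.attach.map (fun t => t.1.varCount x)).sum
decreasing_by simp_wf; have := List.sizeOf_lt_of_mem t.2; omega

/-- The subterm relation. -/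
inductive IsSubterm : Trm F → Trm F → Prop
  | refl (t : Trm F) : IsSubterm t t
  | fn {s t : Trm F} {f : F} {ts : List (Trm F)} : t ∈ ts → IsSubterm s t → IsSubterm s (.fn f ts)

end Trm

/- ## Sequences of terms -/

/-- Application of a substitution to a sequence of terms. -/
def substList {F : Type} (σ : Subst F) (ts : List (Trm F)) : List (Trm F) :=
  ts.map (Trm.subst σ)

/-- The set of variables occurring in a sequence of terms. -/
def varsList {F : Type} (ts : List (Trm F)) : Set ℕ := ⋃ t ∈ ts, t.vars

/-- The number of occurrences of a variable in a sequence of terms. -/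
def varCountList {F : Type} (x : ℕ) (ts : List (Trm F)) : ℕ :=
  (ts.map (Trm.varCount x)).sum

/-- A sequence of terms is linear if every variable occurs at most once in it. -/
def LinearList {F : Type} (ts : List (Trm F)) : Prop :=
  ∀ x : ℕ, varCountList x ts ≤ 1

/-- A term occurs in a sequence of terms if it is a subterm of one of its components. -/
def OccursInList {F : Type} (s : Trm F) (ts : List (Trm F)) : Prop :=
  ∃ t ∈ ts, Trm.IsSubterm s t

namespace Subst
variable {F : Type}

/-- The identity (empty) substitution. -/
def id : Subst F := Trm.var

/-- Composition of substitutions: `(comp σ τ)` applies `σ` first, then `τ`. -/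
def comp (σ τ : Subst F) : Subst F := fun x => (σ x).subst τ

/-- The domain of a substitution. -/
def dom (σ : Subst F) : Set ℕ := {x | σ x ≠ Trm.var x}

/-- A substitution has finite domain. -/
def FiniteDom (σ : Subst F) : Prop := σ.dom.Finite

/-- The set of variables of a substitution: its domain together with the
variables occurring in the images of domain variables. -/
def vars (σ : Subst F) : Set ℕ := σ.dom ∪ ⋃ x ∈ σ.dom, (σ x).vars

/-- A renaming: a substitution given by a permutation of the variables. -/
def IsRenaming (σ : Subst F) : Prop := ∃ e : ℕ ≃ ℕ, σ = fun x => Trm.var (e x)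

end Subst

/-- `θ` is a unifier of the sequences of terms `z` and `w`. -/
def IsUnifierList {F : Type} (θ : Subst F) (z w : List (Trm F)) : Prop :=
  substList θ z = substList θ w

/-- `θ` is a most general unifier (mgu) of the sequences of terms `z` and `w`. -/
def IsMguList {F : Type} (θ : Subst F) (z w : List (Trm F)) : Prop :=
  IsUnifierList θ z w ∧ ∀ σ : Subst F, IsUnifierList σ z w → ∃ γ : Subst F, Subst.comp θ γ = σ

/- ## Atoms, queries, clauses, programs (in presence of a fixed mode) -/

/-- An atom `p(s,t)`, where `s` is the sequence of terms filling in the input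
positions and `t` the sequence of terms filling in the output positions
(as determined by the fixed mode of `p`). -/
structure Atom (P F : Type) where
  rel : P
  inp : List (Trm F)
  out : List (Trm F)

namespace Atom
variable {P F : Type}

def subst (σ : Subst F) (A : Atom P F) : Atom P F :=
  ⟨A.rel, substList σ A.inp, substList σ A.out⟩

def vars (A : Atom P F) : Set ℕ := varsList A.inp ∪ varsList A.out

/-- `θ` is a unifier of two atoms. -/
def IsUnifier (θ : Subst F) (A B : Atom P F) : Prop := A.subst θ = B.subst θ

/-- `θ` is a most general unifier of two atoms. -/
def IsMgu (θ : Subst F) (A B : Atom P F) : Prop :=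
  IsUnifier θ A B ∧ ∀ σ : Subst F, IsUnifier σ A B → ∃ γ : Subst F, Subst.comp θ γ = σ

/-- An mgu of two atoms is relevant if its variables are among those of the two atoms. -/
def RelevantFor (θ : Subst F) (A B : Atom P F) : Prop :=
  Subst.vars θ ⊆ A.vars ∪ B.vars

end Atom

/-- A query: a finite sequence of atoms. -/
abbrev Query (P F : Type) := List (Atom P F)

/-- The set of variables of a query. -/
def queryVars {P F : Type} (Q : Query P F) : Set ℕ := ⋃ A ∈ Q, A.vars

/-- `In(Q)`: the sequence of terms filling in the input positions of `Q`. -/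
def queryInp {P F : Type} (Q : Query P F) : List (Trm F) := Q.flatMap Atom.inp

/-- `Out(Q)`: the sequence of terms filling in the output positions of `Q`. -/
def queryOut {P F : Type} (Q : Query P F) : List (Trm F) := Q.flatMap Atom.out

/-- A clause `H ← B`. -/
structure Clause (P F : Type) where
  head : Atom P F
  body : Query P F

namespace Clause
variable {P F : Type}

def subst (σ : Subst F) (c : Clause P F) : Clause P F :=
  ⟨c.head.subst σ, c.body.map (Atom.subst σ)⟩

def vars (c : Clause P F) : Set ℕ := c.head.vars ∪ queryVars c.body

end Clause

/-- A variant of a clause: obtained by applying a renaming. -/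
def IsVariantOf {P F : Type} (c c' : Clause P F) : Prop :=
  ∃ ρ : Subst F, Subst.IsRenaming ρ ∧ c' = c.subst ρ

/-- A program: a finite set of clauses (represented as a list). -/
abbrev Program (P F : Type) := List (Clause P F)

/- ## Nicely- and simply-moded objects -/

/-- A query `p1(s1,t1),…,pn(sn,tn)` is nicely-moded if `t1,…,tn` is a linear
sequence of terms and for all `i`, `Var(si) ∩ ⋃_{j=i}^{n} Var(tj) = ∅`. -/
def NMQuery {P F : Type} (Q : Query P F) : Prop :=
  LinearList (queryOut Q) ∧
  ∀ (i : ℕ) (h : i < Q.length),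
    varsList (Q.get ⟨i, h⟩).inp ∩ varsList (queryOut (Q.drop i)) = ∅

/-- A clause `p(s0,t0) ← Q` is nicely-moded if `Q` is nicely-moded and
`Var(s0)` is disjoint from the output variables of `Q`. -/
def NMClause {P F : Type} (c : Clause P F) : Prop :=
  NMQuery c.body ∧ varsList c.head.inp ∩ varsList (queryOut c.body) = ∅

/-- A program is nicely-moded if all its clauses are. -/
def NMProgram {P F : Type} (Pgm : Program P F) : Prop := ∀ c ∈ Pgm, NMClause c

/-- A query is simply-moded if it is nicely-moded and its sequence of output
terms is a (linear) sequence of variables. -/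
def SMQuery {P F : Type} (Q : Query P F) : Prop :=
  NMQuery Q ∧ ∀ t ∈ queryOut Q, ∃ x : ℕ, t = Trm.var x

/-- A clause is simply-moded if it is nicely-moded and its body is simply-moded. -/
def SMClause {P F : Type} (c : Clause P F) : Prop :=
  NMClause c ∧ SMQuery c.body

/-- A program is simply-moded if all its clauses are. -/
def SMProgram {P F : Type} (Pgm : Program P F) : Prop := ∀ c ∈ Pgm, SMClause c

/- ## Input-consuming derivations -/

/-- `ICStepAt Q k c θ Q'` : the query `Q'` is obtained from `Q` by an
input-consuming derivation step resolving the atom at position `k` with the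
(already renamed-apart) input clause `c`, via the relevant mgu `θ`. -/
def ICStepAt {P F : Type} (Q : Query P F) (k : ℕ) (c : Clause P F) (θ : Subst F)
    (Q' : Query P F) : Prop :=
  ∃ h : k < Q.length,
    Atom.IsMgu θ (Q.get ⟨k, h⟩) c.head ∧
    Atom.RelevantFor θ (Q.get ⟨k, h⟩) c.head ∧
    substList θ (Q.get ⟨k, h⟩).inp = (Q.get ⟨k, h⟩).inp ∧
    Q' = (Q.take k ++ c.body ++ Q.drop (k + 1)).map (Atom.subst θ)

/-- A (possibly partial, possibly infinite) input-consuming derivation of length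
`len` in program `Pgm`: queries `Q i`, selected atom positions `sel i`, input
clauses `cl i` (variants of program clauses) and relevant mgus `sub i`,
satisfying standardization apart. -/
structure ICDeriv {P F : Type} (Pgm : Program P F) (len : ℕ∞) where
  Q : ℕ → Query P F
  sel : ℕ → ℕ
  cl : ℕ → Clause P F
  sub : ℕ → Subst F
  step : ∀ i : ℕ, (i : ℕ∞) < len → ICStepAt (Q i) (sel i) (cl i) (sub i) (Q (i + 1))
  fromProg : ∀ i : ℕ, (i : ℕ∞) < len → ∃ c ∈ Pgm, IsVariantOf c (cl i)
  standApart : ∀ i : ℕ, (i : ℕ∞) < len →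
    Clause.vars (cl i) ∩
      (queryVars (Q 0) ∪ ⋃ j < i, (Clause.vars (cl j) ∪ Subst.vars (sub j))) = ∅

/-- The composition `θ1 θ2 ⋯ θn` of the first `n` step substitutions. -/
def compRange {F : Type} (θ : ℕ → Subst F) : ℕ → Subst F
  | 0 => Subst.id
  | n + 1 => Subst.comp (compRange θ n) (θ n)

/-- There exists an infinite input-consuming derivation of `Pgm ∪ {Q0}`. -/
def InfICDeriv {P F : Type} (Pgm : Program P F) (Q0 : Query P F) : Prop :=
  ∃ d : ICDeriv Pgm ⊤, d.Q 0 = Q0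

/-- A program is input terminating if all its input-consuming derivations
starting in a nicely-moded query are finite. -/
def InputTerminating {P F : Type} (Pgm : Program P F) : Prop :=
  ∀ Q : Query P F, NMQuery Q → ¬ InfICDeriv Pgm Q

/- ## Dependency between predicate symbols -/

/-- `p` is defined in `Pgm` if `p` occurs in the head of one of its clauses. -/
def DefinedIn {P F : Type} (Pgm : Program P F) (p : P) : Prop :=
  ∃ c ∈ Pgm, c.head.rel = p

/-- `p` occurs in `Pgm` (in a head or in a body). -/
def OccursInProg {P F : Type} (Pgm : Program P F) (p : P) : Prop :=
  ∃ c ∈ Pgm, c.head.rel = p ∨ ∃ B ∈ c.body, B.rel = p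

/-- `Pgm` extends `R` if no relation defined in `Pgm` occurs in `R`. -/
def ProgExtends {P F : Type} (Pgm R : Program P F) : Prop :=
  ∀ p : P, DefinedIn Pgm p → ¬ OccursInProg R p

/-- `p` refers to `q` in `Pgm`. -/
def RefersTo {P F : Type} (Pgm : Program P F) (p q : P) : Prop :=
  ∃ c ∈ Pgm, c.head.rel = p ∧ ∃ B ∈ c.body, B.rel = q

/-- `p ⊒ q` : `p` depends on `q` (reflexive-transitive closure of refers-to). -/
def ProgDependsOn {P F : Type} (Pgm : Program P F) : P → P → Prop :=
  Relation.ReflTransGen (RefersTo Pgm)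

/-- `p ≃ q` : `p` and `q` are mutually dependent. -/
def MutDep {P F : Type} (Pgm : Program P F) (p q : P) : Prop :=
  ProgDependsOn Pgm p q ∧ ProgDependsOn Pgm q p

/-- `p ⊐ q` : `p ⊒ q` and not `p ≃ q`. -/
def SqSupset {P F : Type} (Pgm : Program P F) (p q : P) : Prop :=
  ProgDependsOn Pgm p q ∧ ¬ MutDep Pgm p q

/- ## Moded level mappings and quasi recurrency -/

/-- A moded level mapping: a function from atoms to naturals which does not
depend on the output terms (and is invariant under renaming, as it is a
function on the extended Herbrand base). -/
def ModedLevelMapping {P F : Type} (lvl : Atom P F → ℕ) : Prop :=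
  (∀ (p : P) (s t u : List (Trm F)), lvl ⟨p, s, t⟩ = lvl ⟨p, s, u⟩) ∧
  (∀ (A : Atom P F) (ρ : Subst F), Subst.IsRenaming ρ → lvl (A.subst ρ) = lvl A)

/-- A clause is quasi recurrent wrt `lvl` (in program `Pgm`) if for every
instance `H ← A,B,C` of it, if `Rel(H) ≃ Rel(B)` then `|H| > |B|`. -/
def QRClause {P F : Type} (Pgm : Program P F) (lvl : Atom P F → ℕ) (c : Clause P F) : Prop :=
  ∀ θ : Subst F, ∀ B ∈ c.body, MutDep Pgm c.head.rel B.rel →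
    lvl (B.subst θ) < lvl (c.head.subst θ)

/-- A program is quasi recurrent wrt `lvl` if all its clauses are. -/
def QuasiRecurrentWrt {P F : Type} (Pgm : Program P F) (lvl : Atom P F → ℕ) : Prop :=
  ∀ c ∈ Pgm, QRClause Pgm lvl c

/-- A program is quasi recurrent if it is quasi recurrent wrt some moded level mapping. -/
def QuasiRecurrent {P F : Type} (Pgm : Program P F) : Prop :=
  ∃ lvl : Atom P F → ℕ, ModedLevelMapping lvl ∧ QuasiRecurrentWrt Pgm lvl
/- ## IC-trees -/

/-- `Q'` is a resolvent of `Q` and (a renamed-apart variant of) the clause `c`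
with respect to the atom at position `k`, via an input-consuming step. -/
def ICResolventOf {P F : Type} (Q : Query P F) (k : ℕ) (c : Clause P F)
    (Q' : Query P F) : Prop :=
  ∃ (c' : Clause P F) (θ : Subst F),
    IsVariantOf c c' ∧ Clause.vars c' ∩ queryVars Q = ∅ ∧ ICStepAt Q k c' θ Q'

/-- The atom at position `k` of `Q` is input-consuming resolvable wrt clause `c`. -/
def ICResolvable {P F : Type} (Q : Query P F) (k : ℕ) (c : Clause P F) : Prop :=
  ∃ Q' : Query P F, ICResolventOf Q k c Q'

/-- An IC-tree for `Pgm ∪ {Q0}`, represented by the set `T` of its paths from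
the root (a node of the tree is identified with the path reaching it):
its branches are input-consuming derivations of `Pgm ∪ {Q0}`, and every node
has exactly one descendant for every atom of its query and every program
clause wrt which that atom is input-consuming resolvable, this descendant
being a resolvent. -/
structure IsICTree {P F : Type} (Pgm : Program P F) (Q0 : Query P F)
    (T : Set (List (Query P F))) : Prop where
  root : [Q0] ∈ T
  starts : ∀ l ∈ T, ∃ l' : List (Query P F), l = Q0 :: l'
  prefixClosed : ∀ (l : List (Query P F)) (Qn : Query P F), l ++ [Qn] ∈ T → l ≠ [] → l ∈ T
  children : ∀ l ∈ T, ∀ (k : ℕ) (c : Clause P F), c ∈ Pgm →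
    ICResolvable (l.getLastD []) k c →
    ∃! Q' : Query P F, l ++ [Q'] ∈ T ∧ ICResolventOf (l.getLastD []) k c Q'
  childrenOnly : ∀ (l : List (Query P F)) (Q' : Query P F), l ++ [Q'] ∈ T → l ≠ [] →
    ∃ (k : ℕ) (c : Clause P F), c ∈ Pgm ∧ ICResolventOf (l.getLastD []) k c Q'
  branches : ∀ l ∈ T, ∃ d : ICDeriv Pgm ((l.length - 1 : ℕ) : ℕ∞),
    ∀ i < l.length, d.Q i = l.getD i []

/- ## Input-recursive programs -/

/-- A clause `H ← A,B,C` is input-recursive (in `Pgm`) if whenever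
`Rel(H) ≃ Rel(B)` then `Var(In(B)) ⊆ Var(In(H))`. -/
def InputRecursiveClause {P F : Type} (Pgm : Program P F) (c : Clause P F) : Prop :=
  ∀ B ∈ c.body, MutDep Pgm c.head.rel B.rel → varsList B.inp ⊆ varsList c.head.inp

/-- A program is input-recursive if all its clauses are. -/
def InputRecursive {P F : Type} (Pgm : Program P F) : Prop :=
  ∀ c ∈ Pgm, InputRecursiveClause Pgm c

namespace Trm
variable {F : Type}

theorem my_ind {motive : Trm F → Prop} (hvar : ∀ x, motive (.var x))
    (hfn : ∀ f ts, (∀ t ∈ ts, motive t) → motive (.fn f ts)) : ∀ t, motive t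
  | .var x => hvar x
  | .fn f ts => hfn f ts (fun t _ => my_ind hvar hfn t)
decreasing_by simp_wf; have := List.sizeOf_lt_of_mem (by assumption); omega

theorem subst_fn (σ : Subst F) (f : F) (ts : List (Trm F)) :
    subst σ (.fn f ts) = .fn f (ts.map (subst σ)) := by
  rw [subst]
  simp

theorem vars_fn (f : F) (ts : List (Trm F)) :
    vars (.fn f ts) = ⋃ t ∈ ts, t.vars := by
  have h : ∀ l : List (Trm F), (l.map vars).foldr (· ∪ ·) ∅ = ⋃ t ∈ l, t.vars := by
    intro l; induction l with
    | nil => simp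
    | cons a l ih => simp [ih]
  rw [vars]
  simp only [List.map_subtype, List.unattach_attach]
  exact h ts

theorem varCount_fn (x : ℕ) (f : F) (ts : List (Trm F)) :
    varCount x (.fn f ts) = (ts.map (varCount x)).sum := by
  rw [varCount]
  simp
end Trm
theorem list_map_eq_self {α : Type*} {f : α → α} {l : List α} :
    l.map f = l ↔ ∀ a ∈ l, f a = a := by
  induction l with
  | nil => simp
  | cons a l ih => simp [ih]

namespace Trm
variable {F : Type}

theorem vars_var (x : ℕ) : (Trm.var (F := F) x).vars = {x} := by rw [vars]

theorem varCount_var (x y : ℕ) :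
    (Trm.var (F := F) y).varCount x = if y = x then 1 else 0 := by rw [varCount]

theorem mem_vars_iff (x : ℕ) (t : Trm F) : x ∈ t.vars ↔ 0 < t.varCount x := by
  induction t using my_ind with
  | hvar y => rw [vars_var, varCount_var]; by_cases h : y = x <;> simp [h] <;> omega
  | hfn f ts ih =>
    rw [vars_fn, varCount_fn]
    simp only [Set.mem_iUnion, exists_prop]
    constructor
    · rintro ⟨t, ht, hx⟩
      have := (ih t ht).mp hx
      calc 0 < t.varCount x := this
        _ ≤ _ := List.single_le_sum (by simp) _ (List.mem_map_of_mem ht)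
    · intro h
      by_contra hc
      push_neg at hc
      have : (List.map (varCount x) ts).sum = 0 := by
        apply List.sum_eq_zero
        intro n hn
        obtain ⟨t, ht, rfl⟩ := List.mem_map.mp hn
        have := hc t ht
        rw [ih t ht] at this
        omega
      omega

theorem subst_id_of_vars {σ : Subst F} {t : Trm F} (h : ∀ x ∈ t.vars, σ x = .var x) :
    t.subst σ = t := by
  induction t using my_ind with
  | hvar y => simpa [subst] using h y (by rw [vars_var]; rfl)
  | hfn f ts ih =>
    rw [subst_fn]
    congr 1
    rw [list_map_eq_self]
    intro t ht
    exact ih t ht (fun x hx => h x (by rw [vars_fn]; exact Set.mem_biUnion ht hx))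

theorem vars_id_of_subst {σ : Subst F} {t : Trm F} (h : t.subst σ = t) :
    ∀ x ∈ t.vars, σ x = .var x := by
  induction t using my_ind with
  | hvar y =>
    intro x hx
    rw [vars_var, Set.mem_singleton_iff] at hx
    subst hx
    simpa [subst] using h
  | hfn f ts ih =>
    rw [subst_fn, Trm.fn.injEq] at h
    intro x hx
    rw [vars_fn] at hx
    obtain ⟨t, ht, hxt⟩ := Set.mem_iUnion₂.mp hx
    exact ih t ht (list_map_eq_self.mp h.2 t ht) x hxt
end Trm

section ListLemmas
variable {F : Type}

theorem substList_id_vars {σ : Subst F} {ts : List (Trm F)} (h : substList σ ts = ts) :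
    ∀ x ∈ varsList ts, σ x = Trm.var x := by
  intro x hx
  obtain ⟨t, ht, hxt⟩ := Set.mem_iUnion₂.mp hx
  exact Trm.vars_id_of_subst (list_map_eq_self.mp h t ht) x hxt

theorem substList_id_of_vars {σ : Subst F} {ts : List (Trm F)}
    (h : ∀ x ∈ varsList ts, σ x = Trm.var x) : substList σ ts = ts :=
  list_map_eq_self.mpr fun t ht =>
    Trm.subst_id_of_vars fun x hx => h x (Set.mem_biUnion ht hx)

theorem varCountList_append (x : ℕ) (l₁ l₂ : List (Trm F)) :
    varCountList x (l₁ ++ l₂) = varCountList x l₁ + varCountList x l₂ := by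
  simp [varCountList]

theorem varCountList_pos (x : ℕ) (ts : List (Trm F)) :
    0 < varCountList x ts ↔ x ∈ varsList ts := by
  induction ts with
  | nil => simp [varCountList, varsList]
  | cons t ts ih =>
    have h1 : varCountList x (t :: ts) = t.varCount x + varCountList x ts := by
      simp [varCountList]
    have h2 : varsList (t :: ts) = t.vars ∪ varsList ts := by simp [varsList]
    rw [h1, h2, Set.mem_union, ← ih, Trm.mem_vars_iff]
    omega

theorem varsList_subset_of_sub {l₁ l₂ : List (Trm F)} (h : ∀ t ∈ l₁, t ∈ l₂) :
    varsList l₁ ⊆ varsList l₂ := by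
  intro x hx
  obtain ⟨t, ht, hxt⟩ := Set.mem_iUnion₂.mp hx
  exact Set.mem_biUnion (h t ht) hxt

end ListLemmas

/-- Let the query `A,p(s,t),C` be nicely-moded. If
`A,p(s,t),C ⟹θ (A,B,C)θ` is an input-consuming derivation step with selected
atom `p(s,t)`, input clause (variable disjoint from the query) with body `B`,
and relevant mgu `θ`, then `Aθ = A`. -/
theorem stmt3 {P F : Type} (A C : Query P F) (b : Atom P F) (c : Clause P F)
    (θ : Subst F)
    (hQ : NMQuery (A ++ b :: C))
    (hdisj : Clause.vars c ∩ queryVars (A ++ b :: C) = ∅)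
    (hmgu : Atom.IsMgu θ b c.head)
    (hrel : Atom.RelevantFor θ b c.head)
    (hic : substList θ b.inp = b.inp) :
    A.map (Atom.subst θ) = A := by
  have key : ∀ x ∈ queryVars A, θ x = Trm.var x := by
    intro x hxA
    by_contra hne
    obtain ⟨a, ha, hxa⟩ := Set.mem_iUnion₂.mp hxA
    have hxQ : x ∈ queryVars (A ++ b :: C) :=
      Set.mem_biUnion (List.mem_append_left _ ha) hxa
    have hdom : x ∈ Subst.dom θ := hne
    have hmem : x ∈ b.vars ∨ x ∈ c.head.vars := hrel (Or.inl hdom)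
    have hnc : x ∉ c.head.vars := fun hc' =>
      Set.eq_empty_iff_forall_notMem.mp hdisj x ⟨Or.inl hc', hxQ⟩
    have hxb : x ∈ b.vars := hmem.resolve_right hnc
    rcases hxb with hinp | hout
    · exact hne (substList_id_vars hic x hinp)
    · -- x ∈ varsList b.out; derive contradiction from nicely-modedness
      obtain ⟨i, hi⟩ := List.get_of_mem ha
      rcases hxa with hainp | haout
      · -- x in inputs of a : contradicts NM condition at index i
        have hilen : (i : ℕ) < (A ++ b :: C).length := by
          rw [List.length_append]; omega
        have hget : (A ++ b :: C).get ⟨i, hilen⟩ = a := by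
          rw [← hi]
          simp only [List.get_eq_getElem]; exact List.getElem_append_left i.isLt
        have h2 := hQ.2 i hilen
        rw [hget] at h2
        have hdrop : (A ++ b :: C).drop i = A.drop i ++ b :: C :=
          List.drop_append_of_le_length (le_of_lt i.isLt)
        have hbmem : b ∈ (A ++ b :: C).drop i := by
          rw [hdrop]; simp
        have hxout : x ∈ varsList (queryOut ((A ++ b :: C).drop i)) := by
          apply varsList_subset_of_sub (l₁ := b.out) _ hout
          intro t ht
          exact List.mem_flatMap.mpr ⟨b, hbmem, ht⟩
        exact Set.eq_empty_iff_forall_notMem.mp h2 x ⟨hainp, hxout⟩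
      · -- x in outputs of a and of b: contradicts linearity
        have h1 := hQ.1 x
        have hsplit : queryOut (A ++ b :: C) = queryOut A ++ (b.out ++ queryOut C) := by
          simp [queryOut]
        have hA : x ∈ varsList (queryOut A) := by
          apply varsList_subset_of_sub (l₁ := a.out) _ haout
          intro t ht
          exact List.mem_flatMap.mpr ⟨a, ha, ht⟩
        have c1 : 0 < varCountList x (queryOut A) := (varCountList_pos x _).mpr hA
        have c2 : 0 < varCountList x b.out := (varCountList_pos x _).mpr hout
        rw [hsplit, varCountList_append, varCountList_append] at h1
        omega
  rw [list_map_eq_self]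
  intro a ha
  have hfix : ∀ x ∈ a.vars, θ x = Trm.var x :=
    fun x hx => key x (Set.mem_biUnion ha hx)
  obtain ⟨p, s, t⟩ := a
  simp only [Atom.subst, Atom.mk.injEq, true_and]
  exact ⟨substList_id_of_vars fun x hx => hfix x (Or.inl hx),
         substList_id_of_vars fun x hx => hfix x (Or.inr hx)⟩
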